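/- Assume in addition w + w′ ≤ 2c. Define the target joint distribution P* on {c − r·α(ε), c + r·α(ε)}² by P*(c−rα, c−rα) = (2c − w − w′)/(2r·α(ε)), P*(c−rα, c+rα) = 1/2 + (w′−c)/(2r·α(ε)), P*(c+rα, c−rα) = 1/2 + (w−c)/(2r·α(ε)), and P*(c+rα, c+rα) = 0 (writing rα for r·α(ε)). Then for the correlated stochastic quantizers (Q1, Q2) and every pair of output values (v1, v2) ∈ {c−rα, c+rα}²: |P(Q1 = v1, Q2 = v2) − P*(v1, v2)| ≤ 3/2^d. -/

import Mathlib

/-!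
Conditionally on `Z = z`, the quantizers are independent: `Q1 = c + rα` with probability
the length of `[z, z + 1) ∩ [0, 2^d q1)`, and `Q2 = c − rα` with probability the length of
`[z, z + 1) ∩ [0, 2^d (1 − q2))`. Since `w + w' ≤ 2c` gives `q1 ≤ 1 − q2`, the first interval
lies inside the second, so the event `{Q1 = c + rα, Q2 = c + rα}` can only occur in the
single cell `z = ⌊2^d q1⌋`. Summing over the `2^d` values of `Z`, the four joint
probabilities differ from `P*` by `± P(Q1 = Q2 = c + rα) ≤ 1/2^d`.
-/

open Real Set Finset

/-- `α(ε) = (e^ε + 1)/(e^ε − 1)`. -/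
noncomputable def alphaFn (ε : ℝ) : ℝ := (Real.exp ε + 1) / (Real.exp ε - 1)

/-- `q(u) = 1/2 + (u − c)/(2rα(ε))`, the probability of the `+` level for input `u`. -/
noncomputable def qOf (c r ε u : ℝ) : ℝ := 1 / 2 + (u - c) / (2 * r * alphaFn ε)

/-- `T1 = ⌊2^d · q1⌋`. -/
noncomputable def T1 (c r ε : ℝ) (d : ℕ) (w : ℝ) : ℤ := ⌊(2 : ℝ) ^ d * qOf c r ε w⌋

/-- `P(U = +1) = 2^d·q1 − ⌊2^d·q1⌋`. -/
noncomputable def pU1 (c r ε : ℝ) (d : ℕ) (w : ℝ) : ℝ :=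
  (2 : ℝ) ^ d * qOf c r ε w - ⌊(2 : ℝ) ^ d * qOf c r ε w⌋

/-- `T2 = ⌊2^d · (1 − q2)⌋`. -/
noncomputable def T2 (c r ε : ℝ) (d : ℕ) (w' : ℝ) : ℤ := ⌊(2 : ℝ) ^ d * (1 - qOf c r ε w')⌋

/-- `P(U' = +1) = 2^d·(1 − q2) − ⌊2^d·(1 − q2)⌋`. -/
noncomputable def pU2 (c r ε : ℝ) (d : ℕ) (w' : ℝ) : ℝ :=
  (2 : ℝ) ^ d * (1 - qOf c r ε w') - ⌊(2 : ℝ) ^ d * (1 - qOf c r ε w')⌋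

/-- Value of the first correlated quantizer `Q1` on outcome `(z, u)`:
`c + rα` if `z < T1`, `c − rα` if `z > T1`, and `c + U·rα` if `z = T1`. -/
noncomputable def Q1val (c r ε : ℝ) (d : ℕ) (w : ℝ) (z : ℕ) (u : Bool) : ℝ :=
  if (z : ℤ) < T1 c r ε d w then c + r * alphaFn ε
  else if T1 c r ε d w < (z : ℤ) then c - r * alphaFn ε
  else c + (if u then 1 else -1) * r * alphaFn ε

/-- Value of the second correlated quantizer `Q2` on outcome `(z, u')`:
`c − rα` if `z < T2`, `c + rα` if `z > T2`, and `c − U'·rα` if `z = T2`. -/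
noncomputable def Q2val (c r ε : ℝ) (d : ℕ) (w' : ℝ) (z : ℕ) (u' : Bool) : ℝ :=
  if (z : ℤ) < T2 c r ε d w' then c - r * alphaFn ε
  else if T2 c r ε d w' < (z : ℤ) then c + r * alphaFn ε
  else c - (if u' then 1 else -1) * r * alphaFn ε

/-- Joint pmf of the outcome `(Z, U, U')`: `Z` uniform on `{0, …, 2^d − 1}` and `Z, U, U'`
mutually independent (`u = true` encodes `U = +1`, `u' = true` encodes `U' = +1`). -/
noncomputable def μjoint (c r ε : ℝ) (d : ℕ) (w w' : ℝ) (z : ℕ) (u u' : Bool) : ℝ :=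
  ((2 : ℝ) ^ d)⁻¹ * (if u then pU1 c r ε d w else 1 - pU1 c r ε d w) *
    (if u' then pU2 c r ε d w' else 1 - pU2 c r ε d w')

/-- Joint probability `P(Q1 = v1, Q2 = v2)` for the correlated stochastic quantizers. -/
noncomputable def jointProb (c r ε : ℝ) (d : ℕ) (w w' v1 v2 : ℝ) : ℝ :=
  ∑ z ∈ Finset.range (2 ^ d), ∑ u : Bool, ∑ u' : Bool,
    μjoint c r ε d w w' z u u' *
      (if Q1val c r ε d w z u = v1 ∧ Q2val c r ε d w' z u' = v2 then 1 else 0)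

/-- The target joint distribution `P*` on `{c − rα, c + rα}²` (for `w + w' ≤ 2c`). -/
noncomputable def Pstar (c r ε : ℝ) (w w' v1 v2 : ℝ) : ℝ :=
  if v1 = c - r * alphaFn ε ∧ v2 = c - r * alphaFn ε then
    (2 * c - w - w') / (2 * r * alphaFn ε)
  else if v1 = c - r * alphaFn ε ∧ v2 = c + r * alphaFn ε then
    1 / 2 + (w' - c) / (2 * r * alphaFn ε)
  else if v1 = c + r * alphaFn ε ∧ v2 = c - r * alphaFn ε then
    1 / 2 + (w - c) / (2 * r * alphaFn ε)
  else 0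

lemma one_lt_alphaFn {ε : ℝ} (hε : 0 < ε) : 1 < alphaFn ε := by
  have h := Real.add_one_le_exp ε
  rw [alphaFn, lt_div_iff₀ (by linarith)]
  linarith

lemma qOf_pos {c r ε u : ℝ} (hr : 0 < r) (hε : 0 < ε) (hu : c - r ≤ u) : 0 < qOf c r ε u := by
  have hα := one_lt_alphaFn hε
  have hD : 0 < 2 * r * alphaFn ε := by positivity
  have : -(1 / 2) < (u - c) / (2 * r * alphaFn ε) := by
    rw [lt_div_iff₀ hD]; nlinarith
  rw [qOf]; linarith

lemma qOf_add_qOf_le_one {c r ε u u' : ℝ} (hr : 0 < r) (hε : 0 < ε) (h : u + u' ≤ 2 * c) :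
    qOf c r ε u + qOf c r ε u' ≤ 1 := by
  have hD : 0 < 2 * r * alphaFn ε := by have := one_lt_alphaFn hε; positivity
  have : (u - c) / (2 * r * alphaFn ε) + (u' - c) / (2 * r * alphaFn ε) ≤ 0 := by
    rw [← add_div]; exact div_nonpos_of_nonpos_of_nonneg (by linarith) hD.le
  rw [qOf, qOf]; linarith

/-- For `0 ≤ x`, `floorStep x z` is the length of `[z, z + 1) ∩ [0, x)`. -/
noncomputable def floorStep (x : ℝ) (z : ℕ) : ℝ :=
  if (z : ℤ) < ⌊x⌋ then 1 else if (z : ℤ) = ⌊x⌋ then Int.fract x else 0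

section floorStep

variable {x y : ℝ} {z N : ℕ}

lemma floorStep_nonneg : 0 ≤ floorStep x z := by
  unfold floorStep; split_ifs <;> simp [Int.fract_nonneg]

lemma floorStep_le_one : floorStep x z ≤ 1 := by
  unfold floorStep; split_ifs <;> simp [(Int.fract_lt_one x).le]

lemma floorStep_of_lt_floor (h : (z : ℤ) < ⌊x⌋) : floorStep x z = 1 := if_pos h

lemma floorStep_of_floor_lt (h : ⌊x⌋ < z) : floorStep x z = 0 := by
  rw [floorStep, if_neg (by omega), if_neg (by omega)]

lemma sum_range_floorStep (hx : 0 ≤ x) (hxN : x < N) : ∑ z ∈ range N, floorStep x z = x := by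
  have ht : (⌊x⌋₊ : ℤ) = ⌊x⌋ := Int.natCast_floor_eq_floor hx
  have htN : ⌊x⌋₊ < N := (Nat.floor_lt hx).2 hxN
  have hsplit : ∀ z : ℕ, floorStep x z =
      (if z < ⌊x⌋₊ then 1 else 0) + (if z = ⌊x⌋₊ then Int.fract x else 0) := by
    intro z
    simp only [floorStep, ← ht, Nat.cast_lt, Nat.cast_inj]
    split_ifs <;> first | omega | ring
  have hlt : (range N).filter (· < ⌊x⌋₊) = range ⌊x⌋₊ := by
    ext z; simp only [mem_filter, Finset.mem_range]; omega
  rw [sum_congr rfl fun z _ => hsplit z, sum_add_distrib, sum_boole, hlt, card_range,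
    sum_ite_eq' (range N), if_pos (Finset.mem_range.2 htN)]
  have := Int.floor_add_fract x
  rw [← ht] at this
  exact_mod_cast this

lemma floorStep_mul_one_sub_floorStep_le (hxy : x ≤ y) :
    floorStep x z * (1 - floorStep y z) ≤ if (z : ℤ) = ⌊x⌋ then 1 else 0 := by
  rcases lt_trichotomy (z : ℤ) ⌊x⌋ with h | h | h
  · rw [floorStep_of_lt_floor (h.trans_le (Int.floor_mono hxy)), if_neg h.ne]; simp
  · rw [if_pos h]
    nlinarith [floorStep_nonneg (x := x) (z := z), floorStep_le_one (x := x) (z := z),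
      floorStep_nonneg (x := y) (z := z), floorStep_le_one (x := y) (z := z)]
  · rw [floorStep_of_floor_lt h, if_neg h.ne']; simp

lemma sum_floorStep_mul_one_sub_floorStep_mem_Icc (hx : 0 ≤ x) (hxy : x ≤ y) :
    ∑ z ∈ range N, floorStep x z * (1 - floorStep y z) ∈ Set.Icc 0 1 := by
  refine ⟨sum_nonneg fun z _ => mul_nonneg floorStep_nonneg (sub_nonneg.2 floorStep_le_one), ?_⟩
  calc ∑ z ∈ range N, floorStep x z * (1 - floorStep y z)
      ≤ ∑ z ∈ range N, if z = ⌊x⌋₊ then (1 : ℝ) else 0 := by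
        refine sum_le_sum fun z _ => ?_
        simpa only [← Int.natCast_floor_eq_floor hx, Nat.cast_inj] using
          floorStep_mul_one_sub_floorStep_le hxy
    _ ≤ 1 := by rw [sum_ite_eq' (range N)]; split_ifs <;> norm_num

lemma abs_sum_floorStep_mul_floorStep_sub_le (hx : 0 ≤ x) (hxy : x ≤ y) (hyN : y < N) :
    |∑ z ∈ range N, floorStep x z * floorStep y z - x| ≤ 1 := by
  have hE := sum_floorStep_mul_one_sub_floorStep_mem_Icc (N := N) hx hxy
  simp only [mul_sub, mul_one, sum_sub_distrib, sum_range_floorStep hx (hxy.trans_lt hyN)] at hE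
  rw [abs_le]; constructor <;> linarith [hE.1, hE.2]

lemma abs_sum_floorStep_mul_one_sub_floorStep_le (hx : 0 ≤ x) (hxy : x ≤ y) :
    |∑ z ∈ range N, floorStep x z * (1 - floorStep y z)| ≤ 1 := by
  have hE := sum_floorStep_mul_one_sub_floorStep_mem_Icc (N := N) hx hxy
  rw [abs_le]; constructor <;> linarith [hE.1, hE.2]

lemma abs_sum_one_sub_floorStep_mul_floorStep_sub_le (hx : 0 ≤ x) (hxy : x ≤ y) (hyN : y < N) :
    |∑ z ∈ range N, (1 - floorStep x z) * floorStep y z - (y - x)| ≤ 1 := by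
  have hE := sum_floorStep_mul_one_sub_floorStep_mem_Icc (N := N) hx hxy
  simp only [mul_sub, sub_mul, one_mul, mul_one, sum_sub_distrib,
    sum_range_floorStep hx (hxy.trans_lt hyN), sum_range_floorStep (hx.trans hxy) hyN] at hE ⊢
  rw [abs_le]; constructor <;> linarith [hE.1, hE.2]

lemma abs_sum_one_sub_floorStep_mul_one_sub_floorStep_sub_le (hx : 0 ≤ x) (hxy : x ≤ y)
    (hyN : y < N) :
    |∑ z ∈ range N, (1 - floorStep x z) * (1 - floorStep y z) - (N - y)| ≤ 1 := by
  have hE := sum_floorStep_mul_one_sub_floorStep_mem_Icc (N := N) hx hxy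
  simp only [mul_sub, sub_mul, one_mul, mul_one, sum_sub_distrib, sum_const, card_range,
    nsmul_one, sum_range_floorStep hx (hxy.trans_lt hyN),
    sum_range_floorStep (hx.trans hxy) hyN] at hE ⊢
  rw [abs_le]; constructor <;> linarith [hE.1, hE.2]

end floorStep

noncomputable def bernoulliProb (p : ℝ) (X : Bool → ℝ) (v : ℝ) : ℝ :=
  p * (if X true = v then 1 else 0) + (1 - p) * (if X false = v then 1 else 0)

noncomputable def thresholdQuantizer (k : ℤ) (a b : ℝ) (z : ℕ) (u : Bool) : ℝ :=
  if (z : ℤ) < k then a else if k < (z : ℤ) then b else if u then a else b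

section thresholdQuantizer

variable {a b : ℝ} (x : ℝ) (z : ℕ)

lemma bernoulliProb_thresholdQuantizer_left (hab : a ≠ b) :
    bernoulliProb (Int.fract x) (thresholdQuantizer ⌊x⌋ a b z) a = floorStep x z := by
  unfold bernoulliProb thresholdQuantizer floorStep
  split_ifs <;> first | omega | simp_all

lemma bernoulliProb_thresholdQuantizer_right (hab : a ≠ b) :
    bernoulliProb (Int.fract x) (thresholdQuantizer ⌊x⌋ a b z) b = 1 - floorStep x z := by
  unfold bernoulliProb thresholdQuantizer floorStep
  split_ifs <;> first | omega | simp_all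

end thresholdQuantizer

lemma Q1val_eq_thresholdQuantizer (c r ε : ℝ) (d : ℕ) (w : ℝ) (z : ℕ) :
    Q1val c r ε d w z =
      thresholdQuantizer ⌊(2 : ℝ) ^ d * qOf c r ε w⌋
        (c + r * alphaFn ε) (c - r * alphaFn ε) z := by
  funext u
  cases u <;> simp only [Q1val, T1, thresholdQuantizer] <;> split_ifs <;> ring

lemma Q2val_eq_thresholdQuantizer (c r ε : ℝ) (d : ℕ) (w' : ℝ) (z : ℕ) :
    Q2val c r ε d w' z =
      thresholdQuantizer ⌊(2 : ℝ) ^ d * (1 - qOf c r ε w')⌋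
        (c - r * alphaFn ε) (c + r * alphaFn ε) z := by
  funext u
  cases u <;> simp only [Q2val, T2, thresholdQuantizer] <;> split_ifs <;> ring

lemma jointProb_eq (c r ε : ℝ) (d : ℕ) (w w' v1 v2 : ℝ) :
    jointProb c r ε d w w' v1 v2 = ((2 : ℝ) ^ d)⁻¹ * ∑ z ∈ range (2 ^ d),
      bernoulliProb (Int.fract ((2 : ℝ) ^ d * qOf c r ε w))
        (thresholdQuantizer ⌊(2 : ℝ) ^ d * qOf c r ε w⌋
          (c + r * alphaFn ε) (c - r * alphaFn ε) z) v1 *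
      bernoulliProb (Int.fract ((2 : ℝ) ^ d * (1 - qOf c r ε w')))
        (thresholdQuantizer ⌊(2 : ℝ) ^ d * (1 - qOf c r ε w')⌋
          (c - r * alphaFn ε) (c + r * alphaFn ε) z) v2 := by
  simp only [← Q1val_eq_thresholdQuantizer, ← Q2val_eq_thresholdQuantizer]
  rw [jointProb, mul_sum]
  refine sum_congr rfl fun z _ => ?_
  have hind : ∀ (P Q : Prop) [Decidable P] [Decidable Q],
      (if P ∧ Q then (1 : ℝ) else 0) = (if P then 1 else 0) * (if Q then 1 else 0) := by
    intros; rw [ite_zero_mul_ite_zero, mul_one]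
  simp only [μjoint, bernoulliProb, Fintype.sum_bool, hind, pU1, pU2, Int.fract,
    if_true, Bool.false_eq_true, if_false]
  ring

lemma abs_inv_mul_sub_le_one_div {N S T P : ℝ} (hN : 0 < N) (hS : |S - T| ≤ 1)
    (hP : N * P = T) :
    |N⁻¹ * S - P| ≤ 1 / N := by
  rw [← hP] at hS
  rw [show N⁻¹ * S - P = N⁻¹ * (S - N * P) by field_simp, abs_mul, abs_inv,
    abs_of_pos hN, one_div]
  exact mul_le_of_le_one_right (inv_nonneg.2 hN.le) hS

/-- if `w + w' ≤ 2c`, then for every pair of output values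
`(v1, v2) ∈ {c − rα, c + rα}²`, the joint distribution of the correlated stochastic
quantizers is within `3/2^d` of the target joint distribution `P*`. -/
theorem stmt7 (c r ε : ℝ) (hr : 0 < r) (hε : 0 < ε) (d : ℕ)
    (w w' : ℝ) (hw : w ∈ Icc (c - r) (c + r)) (hw' : w' ∈ Icc (c - r) (c + r))
    (hsum : w + w' ≤ 2 * c) :
    ∀ v1 ∈ ({c - r * alphaFn ε, c + r * alphaFn ε} : Set ℝ),
      ∀ v2 ∈ ({c - r * alphaFn ε, c + r * alphaFn ε} : Set ℝ),
        |jointProb c r ε d w w' v1 v2 - Pstar c r ε w w' v1 v2| ≤ 3 / (2 : ℝ) ^ d := by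
  have hrα : 0 < r * alphaFn ε := mul_pos hr (zero_lt_one.trans (one_lt_alphaFn hε))
  have hne : c - r * alphaFn ε ≠ c + r * alphaFn ε := by linarith
  have hN : (0 : ℝ) < 2 ^ d := by positivity
  have hx1 : 0 ≤ (2 : ℝ) ^ d * qOf c r ε w := by
    have := qOf_pos hr hε hw.1; positivity
  have hx12 : (2 : ℝ) ^ d * qOf c r ε w ≤ 2 ^ d * (1 - qOf c r ε w') := by
    have := qOf_add_qOf_le_one hr hε hsum; gcongr; linarith
  have hx2N : (2 : ℝ) ^ d * (1 - qOf c r ε w') < (2 ^ d : ℕ) := by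
    have := qOf_pos hr hε hw'.1; push_cast; nlinarith
  intro v1 hv1 v2 hv2
  refine (?_ : _ ≤ 1 / (2 : ℝ) ^ d).trans (by gcongr; norm_num)
  rw [jointProb_eq]
  rcases hv1 with rfl | rfl <;> rcases hv2 with rfl | rfl <;>
    simp only [bernoulliProb_thresholdQuantizer_left _ _ hne,
      bernoulliProb_thresholdQuantizer_left _ _ hne.symm,
      bernoulliProb_thresholdQuantizer_right _ _ hne,
      bernoulliProb_thresholdQuantizer_right _ _ hne.symm]
  · refine abs_inv_mul_sub_le_one_div hN
      (abs_sum_one_sub_floorStep_mul_floorStep_sub_le hx1 hx12 hx2N) ?_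
    simp only [Pstar, and_self, if_true, qOf]
    field_simp
    ring
  · refine abs_inv_mul_sub_le_one_div hN
      (abs_sum_one_sub_floorStep_mul_one_sub_floorStep_sub_le hx1 hx12 hx2N) ?_
    simp only [Pstar, hne.symm, and_false, if_false, and_self, if_true]
    push_cast; rw [qOf]; ring
  · refine abs_inv_mul_sub_le_one_div hN
      (abs_sum_floorStep_mul_floorStep_sub_le hx1 hx12 hx2N) ?_
    simp only [Pstar, hne.symm, false_and, if_false, and_self, if_true]
    rw [qOf]
  · refine abs_inv_mul_sub_le_one_div hN
      (by rw [sub_zero]; exact abs_sum_floorStep_mul_one_sub_floorStep_le hx1 hx12) ?_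
    simp only [Pstar, hne.symm, false_and, and_false, if_false, mul_zero]
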